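/- Let n ≥ 1, n1 ≥ 2 with n1 even, m1, m2 ≥ 0 with m1+m2 ≥ 1, r ≥ 0, let d0 ∈ U(n; 2^{m1} 3^{m2}), d1 ∈ U(n1; 2^{m1} 3^{m2}), let d2 be a column-balanced n1×r matrix with entries in {1,2}, let D3 be the corresponding column augmented design, and let D3B be D3 with the two appended blocking columns. Then WD(D3B) ≥ LBW3B, where LBW3B = C(r+2) + (n²/(n+n1)²)·(3/2)^{r+2}·WD(d0) + (1/(n+n1)²)·(5/4)^{m1+1}·(23/18)^{m2+r}·( (3/2)·T1B + 2·(5/4)·T2B ), with φ1B = a·(m1+1)·(n1−2)/(2(n1−1)) + b·m2·(n1−3)/(3(n1−1)) + b·r·(n1−2)/(2(n1−1)), φ2B = a·(m1+1)/2 + b·m2/3, T1B = n1(n1−1)·e^{φ1B}, and T2B = n·n1·e^{φ2B}. -/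

import Mathlib

open Finset

noncomputable section

namespace CAUD

/-- The mapped point value `u = (2x+1)/(2q)`. -/
def uVal (q x : ℕ) : ℝ := (2 * (x : ℝ) + 1) / (2 * (q : ℝ))

/-- The squared wrap-around L2-discrepancy of an `N × M` design whose `k`-th
column takes values in `{0, …, q k - 1}`. -/
def WD {N M : ℕ} (q : Fin M → ℕ) (x : Fin N → Fin M → ℕ) : ℝ :=
  -((4 : ℝ) / 3) ^ M + (1 / (N : ℝ) ^ 2) *
    ∑ i : Fin N, ∑ j : Fin N, ∏ k : Fin M,
      ((3 : ℝ) / 2 - |uVal (q k) (x i k) - uVal (q k) (x j k)| *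
        (1 - |uVal (q k) (x i k) - uVal (q k) (x j k)|))

/-- A mixed-level U-type design in `U(N; 2^{m1} 3^{m2})`: the first `m1` columns are
two-level and balanced, the last `m2` columns are three-level and balanced. -/
def IsUType (N m1 m2 : ℕ) (d : Fin N → Fin (m1 + m2) → ℕ) : Prop :=
  ∀ k : Fin (m1 + m2),
    if (k : ℕ) < m1 then
      (∀ i, d i k < 2) ∧ ∀ v < 2, 2 * (univ.filter (fun i => d i k = v)).card = N
    else
      (∀ i, d i k < 3) ∧ ∀ v < 3, 3 * (univ.filter (fun i => d i k = v)).card = N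

/-- A column-balanced `n1 × r` matrix with entries in `{1, 2}`: every column has
exactly `n1/2` entries equal to 1 and `n1/2` entries equal to 2. -/
def IsBalanced (n1 r : ℕ) (d2 : Fin n1 → Fin r → ℕ) : Prop :=
  (∀ i k, d2 i k = 1 ∨ d2 i k = 2) ∧
  ∀ k, 2 * (univ.filter (fun i => d2 i k = 1)).card = n1 ∧
       2 * (univ.filter (fun i => d2 i k = 2)).card = n1

/-- The column augmented design: first `n` rows are `(d0, 0)`, last `n1` rows `(d1, d2)`. -/
def augDesign (n n1 m r : ℕ) (d0 : Fin n → Fin m → ℕ) (d1 : Fin n1 → Fin m → ℕ)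
    (d2 : Fin n1 → Fin r → ℕ) : Fin (n + n1) → Fin (m + r) → ℕ := fun i k =>
  if hi : (i : ℕ) < n then
    if hk : (k : ℕ) < m then d0 ⟨i, hi⟩ ⟨k, hk⟩ else 0
  else
    if hk : (k : ℕ) < m then d1 ⟨(i : ℕ) - n, by have := i.isLt; omega⟩ ⟨k, hk⟩
    else d2 ⟨(i : ℕ) - n, by have := i.isLt; omega⟩ ⟨(k : ℕ) - m, by have := k.isLt; omega⟩

/-- Append one blocking column: 0 on the initial rows, 1 on the follow-up rows. -/
def appendOne (n n1 M : ℕ) (D : Fin (n + n1) → Fin M → ℕ) :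
    Fin (n + n1) → Fin (M + 1) → ℕ := fun i k =>
  if hk : (k : ℕ) < M then D i ⟨k, hk⟩ else if (i : ℕ) < n then 0 else 1

/-- Append two blocking columns: the first is 0 on the initial rows and 1 on the
follow-up rows; the second is 0 on the initial rows and the first `n1/2` follow-up
rows, and 1 on the remaining follow-up rows. -/
def appendTwo (n n1 M : ℕ) (D : Fin (n + n1) → Fin M → ℕ) :
    Fin (n + n1) → Fin (M + 2) → ℕ := fun i k =>
  if hk : (k : ℕ) < M then D i ⟨k, hk⟩
  else if (k : ℕ) = M then (if (i : ℕ) < n then 0 else 1)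
  else (if (i : ℕ) < n + n1 / 2 then 0 else 1)

/-- Level sizes of the (possibly blocking-augmented) column augmented design:
first `m1` columns are two-level, the next `m2 + r` are three-level, anything
after that (blocking columns) is two-level. -/
def qfun (m1 m2 r k : ℕ) : ℕ :=
  if k < m1 then 2 else if k < m1 + m2 + r then 3 else 2

/-- Coincidence number among the first `m1` columns. -/
def Fco {N M : ℕ} (m1 : ℕ) (D : Fin N → Fin M → ℕ) (i j : Fin N) : ℕ :=
  (univ.filter (fun k : Fin M => (k : ℕ) < m1 ∧ D i k = D j k)).card

/-- Coincidence number among columns `m1, …, m1 + m2 - 1`. -/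
def Vco {N M : ℕ} (m1 m2 : ℕ) (D : Fin N → Fin M → ℕ) (i j : Fin N) : ℕ :=
  (univ.filter (fun k : Fin M => m1 ≤ (k : ℕ) ∧ (k : ℕ) < m1 + m2 ∧ D i k = D j k)).card

/-- Coincidence number among the columns `≥ m`, counting agreements with common
value in `{1, 2}`. -/
def Tco {N M : ℕ} (m : ℕ) (D : Fin N → Fin M → ℕ) (i j : Fin N) : ℕ :=
  (univ.filter (fun k : Fin M =>
    m ≤ (k : ℕ) ∧ D i k = D j k ∧ (D i k = 1 ∨ D i k = 2))).card

/-- Total coincidence number between two rows. -/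
def lam {N M : ℕ} (D : Fin N → Fin M → ℕ) (i j : Fin N) : ℕ :=
  (univ.filter (fun k : Fin M => D i k = D j k)).card

/-- Number of rows whose `k`-th entry is `u` and whose `l`-th entry is `v`. -/
def nuv {N M : ℕ} (d : Fin N → Fin M → ℕ) (k l : Fin M) (u v : ℕ) : ℕ :=
  (univ.filter (fun i : Fin N => d i k = u ∧ d i l = v)).card

/-- Non-orthogonality of a pair of columns. -/
def fNOD {N M : ℕ} (q : Fin M → ℕ) (d : Fin N → Fin M → ℕ) (k l : Fin M) : ℝ :=
  ∑ u ∈ Finset.range (q k), ∑ v ∈ Finset.range (q l),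
    ((nuv d k l u v : ℝ) - (N : ℝ) / ((q k : ℝ) * (q l : ℝ))) ^ 2

/-- The `E(f_NOD)` criterion: average non-orthogonality over all pairs of columns. -/
def EfNOD {N M : ℕ} (q : Fin M → ℕ) (d : Fin N → Fin M → ℕ) : ℝ :=
  (∑ k : Fin M, ∑ l : Fin M, if (k : ℕ) < (l : ℕ) then fNOD q d k l else 0) /
    (Nat.choose M 2 : ℝ)

/-- Stacking the stage designs `d 0, …, d (l-1)` on top of one another. -/
def stack (M : ℕ) (ns : ℕ → ℕ) (d : (j : ℕ) → Fin (ns j) → Fin M → ℕ) :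
    (l : ℕ) → Fin (∑ j ∈ Finset.range l, ns j) → Fin M → ℕ
  | 0 => fun _ _ => 0
  | l + 1 => fun i =>
    let i' : Fin ((∑ j ∈ Finset.range l, ns j) + ns l) :=
      Fin.cast (Finset.sum_range_succ ns l) i
    if h : (i' : ℕ) < ∑ j ∈ Finset.range l, ns j then
      stack M ns d l ⟨(i' : ℕ), h⟩
    else d l ⟨(i' : ℕ) - ∑ j ∈ Finset.range l, ns j, by have := i'.isLt; omega⟩

def aa : ℝ := Real.log (6 / 5)

def bb : ℝ := Real.log (27 / 23)

/-- The constant `C(s)`. -/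
def Cconst (n n1 m s : ℕ) : ℝ :=
  -(((4 : ℝ) / 3) ^ s - ((n : ℝ) ^ 2 / ((n : ℝ) + n1) ^ 2) * ((3 : ℝ) / 2) ^ s) * ((4 : ℝ) / 3) ^ m
  + ((n1 : ℝ) / ((n : ℝ) + n1) ^ 2) * ((3 : ℝ) / 2) ^ (m + s)

def phi1 (n1 m1 m2 r : ℕ) : ℝ :=
  aa * m1 * ((n1 : ℝ) - 2) / (2 * ((n1 : ℝ) - 1)) + bb * m2 * ((n1 : ℝ) - 3) / (3 * ((n1 : ℝ) - 1))
  + bb * r * ((n1 : ℝ) - 2) / (2 * ((n1 : ℝ) - 1))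

def phi2 (m1 m2 : ℕ) : ℝ := aa * m1 / 2 + bb * m2 / 3

def T1c (n1 m1 m2 r : ℕ) : ℝ := (n1 : ℝ) * ((n1 : ℝ) - 1) * Real.exp (phi1 n1 m1 m2 r)

def T2c (n n1 m1 m2 : ℕ) : ℝ := (n : ℝ) * (n1 : ℝ) * Real.exp (phi2 m1 m2)

/-- Lower bound `LBW3` (mixed-level case, Theorem 1). -/
def LBW3 (n n1 m1 m2 r : ℕ) (wd0 : ℝ) : ℝ :=
  Cconst n n1 (m1 + m2) r + ((n : ℝ) ^ 2 / ((n : ℝ) + n1) ^ 2) * ((3 : ℝ) / 2) ^ r * wd0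
  + (1 / ((n : ℝ) + n1) ^ 2) * ((5 : ℝ) / 4) ^ m1 * ((23 : ℝ) / 18) ^ (m2 + r) *
      (T1c n1 m1 m2 r + 2 * T2c n n1 m1 m2)

def phi1p (n1 m r : ℕ) : ℝ :=
  aa * m * ((n1 : ℝ) - 2) / (2 * ((n1 : ℝ) - 1)) + bb * r * ((n1 : ℝ) - 2) / (2 * ((n1 : ℝ) - 1))

def T1pc (n1 m r : ℕ) : ℝ := (n1 : ℝ) * ((n1 : ℝ) - 1) * Real.exp (phi1p n1 m r)

def w1 (m : ℕ) : ℕ := m / 2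

def q1c (n n1 m : ℕ) : ℝ := (m : ℝ) * n * n1 / 2 - (n : ℝ) * n1 * (w1 m : ℝ)

def p1c (n n1 m : ℕ) : ℝ := (n : ℝ) * n1 - q1c n n1 m

/-- Lower bound `LBW3` for a two-level initial design (Theorem 2). -/
def LBW32 (n n1 m r : ℕ) (wd0 : ℝ) : ℝ :=
  Cconst n n1 m r + ((n : ℝ) ^ 2 / ((n : ℝ) + n1) ^ 2) * ((3 : ℝ) / 2) ^ r * wd0
  + (1 / ((n : ℝ) + n1) ^ 2) * ((5 : ℝ) / 4) ^ m * ((23 : ℝ) / 18) ^ r *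
      (T1pc n1 m r + 2 * (p1c n n1 m * ((6 : ℝ) / 5) ^ w1 m + q1c n n1 m * ((6 : ℝ) / 5) ^ (w1 m + 1)))

def w2 (n1 m r : ℕ) : ℤ :=
  ⌊(m : ℝ) * ((n1 : ℝ) - 3) / (3 * ((n1 : ℝ) - 1)) + (r : ℝ) * ((n1 : ℝ) - 2) / (2 * ((n1 : ℝ) - 1))⌋

def q2c (n1 m r : ℕ) : ℝ :=
  (m : ℝ) * n1 * ((n1 : ℝ) - 3) / 3 + (r : ℝ) * n1 * ((n1 : ℝ) - 2) / 2
  - (n1 : ℝ) * ((n1 : ℝ) - 1) * (w2 n1 m r : ℝ)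

def p2c (n1 m r : ℕ) : ℝ := (n1 : ℝ) * ((n1 : ℝ) - 1) - q2c n1 m r

def w3 (m : ℕ) : ℕ := m / 3

def q3c (n n1 m : ℕ) : ℝ := (m : ℝ) * n * n1 / 3 - (n : ℝ) * n1 * (w3 m : ℝ)

def p3c (n n1 m : ℕ) : ℝ := (n : ℝ) * n1 - q3c n n1 m

/-- Lower bound `LBW3` for a three-level initial design (Theorem 3). -/
def LBW33 (n n1 m r : ℕ) (wd0 : ℝ) : ℝ :=
  Cconst n n1 m r + ((n : ℝ) ^ 2 / ((n : ℝ) + n1) ^ 2) * ((3 : ℝ) / 2) ^ r * wd0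
  + (1 / ((n : ℝ) + n1) ^ 2) * ((23 : ℝ) / 18) ^ (m + r) *
      (p2c n1 m r * ((27 : ℝ) / 23) ^ w2 n1 m r + q2c n1 m r * ((27 : ℝ) / 23) ^ (w2 n1 m r + 1)
       + 2 * (p3c n n1 m * ((27 : ℝ) / 23) ^ w3 m + q3c n n1 m * ((27 : ℝ) / 23) ^ (w3 m + 1)))

/-- Lower bound of Theorem 4 for a mixed-level initial design. -/
def LBW3b1 (n n1 m1 m2 r : ℕ) (wd0 : ℝ) : ℝ :=
  Cconst n n1 (m1 + m2) (r + 1) + ((n : ℝ) ^ 2 / ((n : ℝ) + n1) ^ 2) * ((3 : ℝ) / 2) ^ (r + 1) * wd0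
  + (1 / ((n : ℝ) + n1) ^ 2) * ((5 : ℝ) / 4) ^ m1 * ((23 : ℝ) / 18) ^ (m2 + r) *
      ((3 : ℝ) / 2 * T1c n1 m1 m2 r + 2 * ((5 : ℝ) / 4) * T2c n n1 m1 m2)

/-- Lower bound of Theorem 4 for a two-level initial design. -/
def LBW3b2 (n n1 m r : ℕ) (wd0 : ℝ) : ℝ :=
  Cconst n n1 m (r + 1) + ((n : ℝ) ^ 2 / ((n : ℝ) + n1) ^ 2) * ((3 : ℝ) / 2) ^ (r + 1) * wd0
  + (1 / ((n : ℝ) + n1) ^ 2) * ((5 : ℝ) / 4) ^ m * ((23 : ℝ) / 18) ^ r *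
      ((3 : ℝ) / 2 * T1pc n1 m r +
        2 * ((5 : ℝ) / 4) * (p1c n n1 m * ((6 : ℝ) / 5) ^ w1 m + q1c n n1 m * ((6 : ℝ) / 5) ^ (w1 m + 1)))

/-- Lower bound of Theorem 4 for a three-level initial design. -/
def LBW3b3 (n n1 m r : ℕ) (wd0 : ℝ) : ℝ :=
  Cconst n n1 m (r + 1) + ((n : ℝ) ^ 2 / ((n : ℝ) + n1) ^ 2) * ((3 : ℝ) / 2) ^ (r + 1) * wd0
  + (1 / ((n : ℝ) + n1) ^ 2) * ((23 : ℝ) / 18) ^ (m + r) *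
      ((3 : ℝ) / 2 * (p2c n1 m r * ((27 : ℝ) / 23) ^ w2 n1 m r
                      + q2c n1 m r * ((27 : ℝ) / 23) ^ (w2 n1 m r + 1))
       + 2 * ((5 : ℝ) / 4) * (p3c n n1 m * ((27 : ℝ) / 23) ^ w3 m
                              + q3c n n1 m * ((27 : ℝ) / 23) ^ (w3 m + 1)))

def phi1B (n1 m1 m2 r : ℕ) : ℝ :=
  aa * ((m1 : ℝ) + 1) * ((n1 : ℝ) - 2) / (2 * ((n1 : ℝ) - 1))
  + bb * m2 * ((n1 : ℝ) - 3) / (3 * ((n1 : ℝ) - 1))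
  + bb * r * ((n1 : ℝ) - 2) / (2 * ((n1 : ℝ) - 1))

def phi2B (m1 m2 : ℕ) : ℝ := aa * ((m1 : ℝ) + 1) / 2 + bb * m2 / 3

def T1Bc (n1 m1 m2 r : ℕ) : ℝ := (n1 : ℝ) * ((n1 : ℝ) - 1) * Real.exp (phi1B n1 m1 m2 r)

def T2Bc (n n1 m1 m2 : ℕ) : ℝ := (n : ℝ) * (n1 : ℝ) * Real.exp (phi2B m1 m2)

/-- Lower bound `LBW3B` (Theorem 5). -/
def LBW3B (n n1 m1 m2 r : ℕ) (wd0 : ℝ) : ℝ :=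
  Cconst n n1 (m1 + m2) (r + 2) + ((n : ℝ) ^ 2 / ((n : ℝ) + n1) ^ 2) * ((3 : ℝ) / 2) ^ (r + 2) * wd0
  + (1 / ((n : ℝ) + n1) ^ 2) * ((5 : ℝ) / 4) ^ (m1 + 1) * ((23 : ℝ) / 18) ^ (m2 + r) *
      ((3 : ℝ) / 2 * T1Bc n1 m1 m2 r + 2 * ((5 : ℝ) / 4) * T2Bc n n1 m1 m2)

def psi1 (n1 m1 m2 r : ℕ) : ℤ :=
  ⌊((m1 : ℝ) * ((n1 : ℝ) - 2) / 2 + (m2 : ℝ) * ((n1 : ℝ) - 3) / 3 + (r : ℝ) * ((n1 : ℝ) - 2) / 2) /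
      ((n1 : ℝ) - 1)⌋

def eta1 (n1 m1 m2 r : ℕ) : ℝ :=
  (m1 : ℝ) * n1 * ((n1 : ℝ) - 2) / 2 + (m2 : ℝ) * n1 * ((n1 : ℝ) - 3) / 3
  + (r : ℝ) * n1 * ((n1 : ℝ) - 2) / 2 - (n1 : ℝ) * ((n1 : ℝ) - 1) * (psi1 n1 m1 m2 r : ℝ)

def zeta1 (n1 m1 m2 r : ℕ) : ℝ := (n1 : ℝ) * ((n1 : ℝ) - 1) - eta1 n1 m1 m2 r

def psi2 (m1 m2 : ℕ) : ℤ := ⌊(m1 : ℝ) / 2 + (m2 : ℝ) / 3⌋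

def eta2 (n n1 m1 m2 : ℕ) : ℝ :=
  (m1 : ℝ) * n * n1 / 2 + (m2 : ℝ) * n * n1 / 3 - (n : ℝ) * n1 * (psi2 m1 m2 : ℝ)

def zeta2 (n n1 m1 m2 : ℕ) : ℝ := (n : ℝ) * n1 - eta2 n n1 m1 m2

def Q1c (n1 m1 m2 r : ℕ) : ℝ :=
  zeta1 n1 m1 m2 r * (psi1 n1 m1 m2 r : ℝ) ^ 2 + eta1 n1 m1 m2 r * ((psi1 n1 m1 m2 r : ℝ) + 1) ^ 2

def Q1pc (n1 m1 m2 r : ℕ) : ℝ :=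
  zeta1 n1 m1 m2 r * ((psi1 n1 m1 m2 r : ℝ) + 1) ^ 2 + eta1 n1 m1 m2 r * ((psi1 n1 m1 m2 r : ℝ) + 2) ^ 2

def Q2c (n n1 m1 m2 : ℕ) : ℝ :=
  zeta2 n n1 m1 m2 * (psi2 m1 m2 : ℝ) ^ 2 + eta2 n n1 m1 m2 * ((psi2 m1 m2 : ℝ) + 1) ^ 2

/-- Lower bound `LBf3` for `E(f_NOD)` of the column augmented design. -/
def LBf3 (n n1 m1 m2 r : ℕ) (ef0 : ℝ) : ℝ :=
  ((m1 : ℝ) + m2) * ((m1 : ℝ) + m2 - 1) / (((m1 : ℝ) + m2 + r) * ((m1 : ℝ) + m2 + r - 1)) * ef0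
  + 1 / (((m1 : ℝ) + m2 + r) * ((m1 : ℝ) + m2 + r - 1)) * (Q1c n1 m1 m2 r + 2 * Q2c n n1 m1 m2)
  + ((n : ℝ) + n1) * ((m1 : ℝ) + m2 + r) / ((m1 : ℝ) + m2 + r - 1)
  - 1 / (((m1 : ℝ) + m2 + r) * ((m1 : ℝ) + m2 + r - 1)) *
    ((n : ℝ) * ((m1 : ℝ) + m2) ^ 2
      - (n : ℝ) ^ 2 * (((m1 : ℝ) + (m1 : ℝ) ^ 2) / 4 + (2 * (m2 : ℝ) + (m2 : ℝ) ^ 2) / 9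
          + (m1 : ℝ) * m2 / 3)
      - (r : ℝ) * m1 * n * ((n : ℝ) - 2)
      - 2 * (r : ℝ) * m2 * n * ((n : ℝ) - 3) / 3
      - (n : ℝ) * ((n : ℝ) - 1) * (r : ℝ) ^ 2
      + (r : ℝ) * ((n : ℝ) ^ 2 + (n1 : ℝ) ^ 2 / 2)
      + ((m1 : ℝ) / 2 + (m2 : ℝ) / 3 + (m1 : ℝ) * ((m1 : ℝ) - 1) / 4
          + ((m2 : ℝ) + r) * ((m2 : ℝ) + r - 1) / 9 + (m1 : ℝ) * ((m2 : ℝ) + r) / 3)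
        * ((n : ℝ) + n1) ^ 2)

/-- Lower bound `LBf3b` for `E(f_NOD)` of the design with one added blocking column. -/
def LBf3b (n n1 m1 m2 r : ℕ) (ef0 : ℝ) : ℝ :=
  ((m1 : ℝ) + m2) * ((m1 : ℝ) + m2 - 1) / (((m1 : ℝ) + m2 + r + 1) * ((m1 : ℝ) + m2 + r)) * ef0
  + 1 / (((m1 : ℝ) + m2 + r + 1) * ((m1 : ℝ) + m2 + r)) * (Q1pc n1 m1 m2 r + 2 * Q2c n n1 m1 m2)
  + ((n : ℝ) + n1) * ((m1 : ℝ) + m2 + r + 1) / ((m1 : ℝ) + m2 + r)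
  - 1 / (((m1 : ℝ) + m2 + r + 1) * ((m1 : ℝ) + m2 + r)) *
    ((n : ℝ) * ((m1 : ℝ) + m2) ^ 2
      - (n : ℝ) ^ 2 * (((m1 : ℝ) + (m1 : ℝ) ^ 2) / 4 + (2 * (m2 : ℝ) + (m2 : ℝ) ^ 2) / 9
          + (m1 : ℝ) * m2 / 3)
      - ((r : ℝ) + 1) * m1 * n * ((n : ℝ) - 2)
      - 2 * ((r : ℝ) + 1) * m2 * n * ((n : ℝ) - 3) / 3
      - (n : ℝ) * ((n : ℝ) - 1) * ((r : ℝ) + 1) ^ 2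
      + (r : ℝ) * ((n : ℝ) ^ 2 + (n1 : ℝ) ^ 2 / 2) + (n : ℝ) ^ 2 + (n1 : ℝ) ^ 2
      + ((m1 : ℝ) / 2 + (m2 : ℝ) / 3 + (m1 : ℝ) * ((m1 : ℝ) + 1) / 4
          + ((m2 : ℝ) + r) * ((m2 : ℝ) + r - 1) / 9 + ((m1 : ℝ) + 1) * ((m2 : ℝ) + r) / 3)
        * ((n : ℝ) + n1) ^ 2)

/-- Lower bound `LBf3B` for `E(f_NOD)` of the design with two added blocking columns. -/
def LBf3B (n n1 m1 m2 r : ℕ) (ef0 : ℝ) : ℝ :=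
  ((m1 : ℝ) + m2) * ((m1 : ℝ) + m2 - 1) / (((m1 : ℝ) + m2 + r + 2) * ((m1 : ℝ) + m2 + r + 1)) * ef0
  + 1 / (((m1 : ℝ) + m2 + r + 2) * ((m1 : ℝ) + m2 + r + 1)) *
      (Q1pc n1 (m1 + 1) m2 r + 2 * Q2c n n1 (m1 + 1) m2)
  + ((n : ℝ) + n1) * ((m1 : ℝ) + m2 + r + 2) / ((m1 : ℝ) + m2 + r + 1)
  - 1 / (((m1 : ℝ) + m2 + r + 2) * ((m1 : ℝ) + m2 + r + 1)) *
    ((n : ℝ) * ((m1 : ℝ) + m2) ^ 2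
      - (n : ℝ) ^ 2 * (((m1 : ℝ) + (m1 : ℝ) ^ 2) / 4 + (2 * (m2 : ℝ) + (m2 : ℝ) ^ 2) / 9
          + (m1 : ℝ) * m2 / 3)
      - ((r : ℝ) + 2) * m1 * n * ((n : ℝ) - 2)
      - 2 * ((r : ℝ) + 2) * m2 * n * ((n : ℝ) - 3) / 3
      - (n : ℝ) * ((n : ℝ) - 1) * ((r : ℝ) + 2) ^ 2
      + ((r : ℝ) + 2) * (n : ℝ) ^ 2 + (3 + (r : ℝ)) * (n1 : ℝ) ^ 2 / 2 + (n : ℝ) * n1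
      + ((m1 : ℝ) / 2 + (m2 : ℝ) / 3 + ((m1 : ℝ) + 2) * ((m1 : ℝ) + 1) / 4
          + ((m2 : ℝ) + r) * ((m2 : ℝ) + r - 1) / 9 + ((m1 : ℝ) + 2) * ((m2 : ℝ) + r) / 3)
        * ((n : ℝ) + n1) ^ 2)



/-!
On a column with `q ∈ {2, 3}` levels the wrap-around kernel is `3/2` on coinciding entries and
`5/4` (`q = 2`) or `23/18` (`q = 3`) otherwise, so the kernel product of two rows is a constant
times `exp` of their weighted coincidence number, with weights `log (6/5)` and `log (27/23)`.
Split the double sum defining `WD(D3B)` into initial/initial, initial/follow-up and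
follow-up/follow-up pairs. The initial rows vanish on the `r + 2` added columns, so the first
block is `(3/2)^(r+2)` times the sum defining `WD(d0)`. On the other two blocks (off the
diagonal) Jensen's inequality for `exp` bounds the sum below by the number of pairs times `exp`
of the mean weighted coincidence number, and the balance of `d0`, `d1`, `d2` and of the blocking
columns fixes the total coincidence number of each block, whatever the designs are.
-/

/-- The kernel `3/2 - δ(1 - δ)` between distinct levels of a `q`-level column:
`δ = 1/2` when `q = 2`, and `δ ∈ {1/3, 2/3}` when `q = 3`. -/
def offKernel (q : ℕ) : ℝ := if q = 2 then 5 / 4 else 23 / 18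

def coincWeight (q : ℕ) : ℝ := Real.log (3 / 2 / offKernel q)

def wdKernel (q x y : ℕ) : ℝ :=
  3 / 2 - |uVal q x - uVal q y| * (1 - |uVal q x - uVal q y|)

def kernelProd {M : ℕ} (q : Fin M → ℕ) (x y : Fin M → ℕ) : ℝ :=
  ∏ k, wdKernel (q k) (x k) (y k)

def coinc {M : ℕ} (q : Fin M → ℕ) (x y : Fin M → ℕ) : ℝ :=
  ∑ k, if x k = y k then coincWeight (q k) else 0

lemma coincWeight_two : coincWeight 2 = aa := by
  norm_num [coincWeight, offKernel, aa]

lemma coincWeight_three : coincWeight 3 = bb := by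
  norm_num [coincWeight, offKernel, bb]

lemma offKernel_pos (q : ℕ) : 0 < offKernel q := by
  unfold offKernel; split_ifs <;> norm_num

lemma offKernel_mul_exp_coincWeight (q : ℕ) :
    offKernel q * Real.exp (coincWeight q) = 3 / 2 := by
  rw [coincWeight, Real.exp_log (by have := offKernel_pos q; positivity)]
  field_simp [(offKernel_pos q).ne']

lemma wdKernel_self (q x : ℕ) : wdKernel q x x = 3 / 2 := by
  simp [wdKernel]

lemma wdKernel_comm (q x y : ℕ) : wdKernel q x y = wdKernel q y x := by
  simp only [wdKernel, abs_sub_comm]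

lemma wdKernel_of_ne {q x y : ℕ} (hq : q = 2 ∨ q = 3) (hx : x < q) (hy : y < q)
    (hxy : x ≠ y) : wdKernel q x y = offKernel q := by
  rcases hq with rfl | rfl <;> interval_cases x <;> interval_cases y <;>
    (try exact absurd rfl hxy) <;>
    norm_num [wdKernel, uVal, offKernel, abs_of_pos, abs_of_neg]

lemma wdKernel_eq_mul_exp {q x y : ℕ} (hq : q = 2 ∨ q = 3) (hx : x < q) (hy : y < q) :
    wdKernel q x y = offKernel q * Real.exp (if x = y then coincWeight q else 0) := by
  split_ifs with hxy
  · rw [hxy, wdKernel_self, offKernel_mul_exp_coincWeight]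
  · rw [wdKernel_of_ne hq hx hy hxy, Real.exp_zero, mul_one]

lemma WD_eq {N M : ℕ} (q : Fin M → ℕ) (X : Fin N → Fin M → ℕ) :
    WD q X = -(4 / 3 : ℝ) ^ M + 1 / (N : ℝ) ^ 2 * ∑ i, ∑ j, kernelProd q (X i) (X j) := rfl

lemma sum_sum_kernelProd {N M : ℕ} (q : Fin M → ℕ) (X : Fin N → Fin M → ℕ) :
    ∑ i, ∑ j, kernelProd q (X i) (X j) = (N : ℝ) ^ 2 * (WD q X + (4 / 3 : ℝ) ^ M) := by
  rcases N.eq_zero_or_pos with rfl | hN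
  · simp
  · rw [WD_eq]; field_simp; ring

section Rows

variable {M : ℕ} (q : Fin M → ℕ)

lemma kernelProd_self (x : Fin M → ℕ) : kernelProd q x x = (3 / 2) ^ M := by
  simp only [kernelProd, wdKernel_self, Finset.prod_const, Finset.card_univ, Fintype.card_fin]

lemma kernelProd_comm (x y : Fin M → ℕ) : kernelProd q x y = kernelProd q y x := by
  simp only [kernelProd, wdKernel_comm]

lemma coinc_self (x : Fin M → ℕ) : coinc q x x = ∑ k, coincWeight (q k) := by
  simp [coinc]

lemma kernelProd_eq_mul_exp (hq : ∀ k, q k = 2 ∨ q k = 3) {x y : Fin M → ℕ}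
    (hx : ∀ k, x k < q k) (hy : ∀ k, y k < q k) :
    kernelProd q x y = (∏ k, offKernel (q k)) * Real.exp (coinc q x y) := by
  rw [coinc, Real.exp_sum, ← Finset.prod_mul_distrib]
  exact Finset.prod_congr rfl fun k _ => wdKernel_eq_mul_exp (hq k) (hx k) (hy k)

lemma sum_sum_coinc {p p' : ℕ} (x : Fin p → Fin M → ℕ) (y : Fin p' → Fin M → ℕ) :
    ∑ i, ∑ j, coinc q (x i) (y j)
      = ∑ k, ∑ i, ∑ j, if x i k = y j k then coincWeight (q k) else 0 := by
  simp only [coinc]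
  exact (Finset.sum_congr rfl fun i _ => Finset.sum_comm).trans Finset.sum_comm

end Rows

lemma card_mul_exp_le_sum_exp {ι : Type*} (s : Finset ι) (f : ι → ℝ) {φ : ℝ}
    (hφ : ∑ a ∈ s, f a = s.card * φ) :
    s.card * Real.exp φ ≤ ∑ a ∈ s, Real.exp (f a) := by
  rcases s.eq_empty_or_nonempty with rfl | hs
  · simp
  have hc : (0 : ℝ) < s.card := by exact_mod_cast hs.card_pos
  have hmean : ∑ a ∈ s, (s.card : ℝ)⁻¹ * f a = φ := by
    rw [← Finset.mul_sum, hφ]; field_simp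
  have h := convexOn_exp.map_sum_le (t := s) (w := fun _ => (s.card : ℝ)⁻¹) (p := f)
    (fun _ _ => by positivity) (by simp [hc.ne']) (fun _ _ => trivial)
  simp only [smul_eq_mul, hmean, ← Finset.mul_sum] at h
  calc (s.card : ℝ) * Real.exp φ
      ≤ s.card * ((s.card : ℝ)⁻¹ * ∑ a ∈ s, Real.exp (f a)) := by gcongr
    _ = ∑ a ∈ s, Real.exp (f a) := by field_simp

section Blocks

variable {M : ℕ} (q : Fin M → ℕ)

lemma mul_card_mul_exp_le_sum_kernelProd (hq : ∀ k, q k = 2 ∨ q k = 3) {ι : Type*}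
    (s : Finset ι) {x y : ι → Fin M → ℕ} (hx : ∀ a k, x a k < q k) (hy : ∀ a k, y a k < q k)
    {φ : ℝ} (hφ : ∑ a ∈ s, coinc q (x a) (y a) = s.card * φ) :
    (∏ k, offKernel (q k)) * (s.card * Real.exp φ)
      ≤ ∑ a ∈ s, kernelProd q (x a) (y a) := by
  simp only [kernelProd_eq_mul_exp q hq (hx _) (hy _), ← Finset.mul_sum]
  exact mul_le_mul_of_nonneg_left (card_mul_exp_le_sum_exp s _ hφ)
    (Finset.prod_nonneg fun k _ => (offKernel_pos _).le)

lemma mul_exp_le_sum_sum_kernelProd (hq : ∀ k, q k = 2 ∨ q k = 3) {p p' : ℕ}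
    {x : Fin p → Fin M → ℕ} {y : Fin p' → Fin M → ℕ} (hx : ∀ i k, x i k < q k)
    (hy : ∀ j k, y j k < q k) {φ : ℝ} (hφ : ∑ i, ∑ j, coinc q (x i) (y j) = p * p' * φ) :
    (∏ k, offKernel (q k)) * (p * p' * Real.exp φ)
      ≤ ∑ i, ∑ j, kernelProd q (x i) (y j) := by
  simpa [← Finset.univ_product_univ, Finset.sum_product, mul_assoc] using
    mul_card_mul_exp_le_sum_kernelProd q hq (Finset.univ ×ˢ Finset.univ)
      (x := fun a => x a.1) (y := fun a => y a.2) (fun a => hx a.1) (fun a => hy a.2)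
      (φ := φ) (by simpa [← Finset.univ_product_univ, Finset.sum_product, mul_assoc] using hφ)

lemma add_mul_exp_le_sum_sum_kernelProd (hq : ∀ k, q k = 2 ∨ q k = 3) {p : ℕ}
    {x : Fin p → Fin M → ℕ} (hx : ∀ i k, x i k < q k) {φ : ℝ}
    (hφ : ∑ i, ∑ j, coinc q (x i) (x j) - p * ∑ k, coincWeight (q k) = p * (p - 1) * φ) :
    p * (3 / 2) ^ M + (∏ k, offKernel (q k)) * (p * (p - 1) * Real.exp φ)
      ≤ ∑ i, ∑ j, kernelProd q (x i) (x j) := by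
  have hsplit (f : Fin p → Fin p → ℝ) :
      ∑ i, ∑ j, f i j = ∑ i, f i i + ∑ a ∈ Finset.univ.offDiag, f a.1 a.2 := by
    rw [← Finset.sum_product', ← Finset.diag_union_offDiag,
      Finset.sum_union (Finset.disjoint_diag_offDiag _), Finset.sum_diag]
  have hcard : ((Finset.univ : Finset (Fin p)).offDiag.card : ℝ) = p * (p - 1) := by
    rw [Finset.offDiag_card, Finset.card_univ, Fintype.card_fin,
      Nat.cast_sub (Nat.le_mul_self p)]
    push_cast; ring
  have hoff : ∑ a ∈ (Finset.univ : Finset (Fin p)).offDiag, coinc q (x a.1) (x a.2)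
      = ((Finset.univ : Finset (Fin p)).offDiag.card : ℝ) * φ := by
    have h := hsplit fun i j => coinc q (x i) (x j)
    simp only [coinc_self, Finset.sum_const, Finset.card_univ, Fintype.card_fin,
      nsmul_eq_mul] at h
    rw [hcard]
    linarith
  have hoff_le := mul_card_mul_exp_le_sum_kernelProd q hq (Finset.univ : Finset (Fin p)).offDiag
    (x := fun a => x a.1) (y := fun a => x a.2) (fun a => hx a.1) (fun a => hx a.2) hoff
  rw [hsplit fun i j => kernelProd q (x i) (x j), ← hcard]
  simp only [kernelProd_self, Finset.sum_const, Finset.card_univ, Fintype.card_fin, nsmul_eq_mul]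
  linarith

end Blocks

lemma sum_sum_ite_eq_of_balanced {p p' : ℕ} (S : Finset ℕ) (f : Fin p → ℕ)
    (g : Fin p' → ℕ) (hf : ∀ i, f i ∈ S) (hg : ∀ v ∈ S, S.card * #{j | g j = v} = p')
    (w : ℝ) :
    ∑ i, ∑ j, (if f i = g j then w else 0) = p * (p' / S.card) * w := by
  have hrow (i : Fin p) : ∑ j, (if f i = g j then w else 0) = p' / S.card * w := by
    have hS : (S.card : ℝ) ≠ 0 := by exact_mod_cast (Finset.card_pos.2 ⟨_, hf i⟩).ne'
    have hc : (#{j | g j = f i} : ℝ) = p' / S.card := by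
      rw [eq_div_iff hS, mul_comm]; exact_mod_cast hg _ (hf i)
    simp_rw [Finset.sum_ite, Finset.sum_const_zero, add_zero, Finset.sum_const, nsmul_eq_mul,
      eq_comm (a := f i), hc]
  simp [hrow, mul_assoc]

lemma two_mul_card_filter_half {n1 : ℕ} (hev : Even n1) {v : ℕ}
    (hv : v ∈ ({0, 1} : Finset ℕ)) :
    2 * #{j : Fin n1 | (if (j : ℕ) < n1 / 2 then 0 else 1) = v} = n1 := by
  have hlt : #{j : Fin n1 | (j : ℕ) < n1 / 2} = n1 / 2 := by
    rw [Fin.card_filter_val_lt]; omega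
  obtain ⟨t, rfl⟩ := hev
  rcases Finset.mem_insert.1 hv with rfl | hv
  · simp only [ite_eq_left_iff, one_ne_zero, imp_false, not_not, hlt]; omega
  · simp only [Finset.mem_singleton.1 hv, ite_eq_right_iff, zero_ne_one, imp_false,
      Finset.filter_not, Finset.card_sdiff, Finset.inter_univ, Finset.card_univ,
      Fintype.card_fin, hlt]
    omega

@[to_additive]
lemma prod_fin_add_add_two {α : Type*} [CommMonoid α] {m r : ℕ} (f : Fin (m + r + 2) → α) :
    ∏ k, f k = (∏ k : Fin m, f (Fin.castAdd 2 (Fin.castAdd r k)))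
      * (∏ k : Fin r, f (Fin.castAdd 2 (Fin.natAdd m k)))
      * f (Fin.natAdd (m + r) 0) * f (Fin.natAdd (m + r) 1) := by
  rw [Fin.prod_univ_add, Fin.prod_univ_add, Fin.prod_univ_two, mul_assoc _ (f _)]

lemma sum_sum_fin_add_of_comm {a b : ℕ} (f : Fin (a + b) → Fin (a + b) → ℝ)
    (hf : ∀ x y, f x y = f y x) :
    ∑ x, ∑ y, f x y = ∑ i, ∑ j, f (Fin.castAdd b i) (Fin.castAdd b j)
      + 2 * ∑ i, ∑ j, f (Fin.castAdd b i) (Fin.natAdd a j)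
      + ∑ i, ∑ j, f (Fin.natAdd a i) (Fin.natAdd a j) := by
  simp only [Fin.sum_univ_add, Finset.sum_add_distrib]
  have hswap : ∑ i, ∑ j, f (Fin.natAdd a i) (Fin.castAdd b j)
      = ∑ i, ∑ j, f (Fin.castAdd b i) (Fin.natAdd a j) := by
    rw [Finset.sum_comm]
    exact Finset.sum_congr rfl fun i _ => Finset.sum_congr rfl fun j _ => hf _ _
  rw [hswap]
  ring

section Levels

variable (m1 m2 r : ℕ)

lemma qfun_eq_of_lt {k : ℕ} (hk : k < m1 + m2) :
    qfun m1 m2 r k = if k < m1 then 2 else 3 := by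
  unfold qfun; split_ifs <;> omega

lemma qfun_eq_two_or_three (k : ℕ) : qfun m1 m2 r k = 2 ∨ qfun m1 m2 r k = 3 := by
  unfold qfun; split_ifs <;> simp

lemma qfun_add_fin (k : Fin r) : qfun m1 m2 r (m1 + m2 + k) = 3 := by
  unfold qfun; rw [if_neg (by omega), if_pos (by omega)]

lemma qfun_add_add (t : ℕ) : qfun m1 m2 r (m1 + m2 + r + t) = 2 := by
  unfold qfun; rw [if_neg (by omega), if_neg (by omega)]

@[to_additive]
lemma prod_fin_qfun {α : Type*} [CommMonoid α] (F : ℕ → α) :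
    ∏ k : Fin (m1 + m2), F (qfun m1 m2 r k) = F 2 ^ m1 * F 3 ^ m2 := by
  rw [Fin.prod_univ_add]
  congr 1
  · rw [← Fin.prod_const]
    exact Finset.prod_congr rfl fun k _ => by simp [qfun]
  · rw [← Fin.prod_const]
    exact Finset.prod_congr rfl fun k _ => by
      simp [qfun, show m1 + (k : ℕ) < m1 + m2 + r by omega]

@[to_additive]
lemma prod_fin_qfun_add_add_two {α : Type*} [CommMonoid α] (F : ℕ → α) :
    ∏ k : Fin (m1 + m2 + r + 2), F (qfun m1 m2 r k) = F 2 ^ (m1 + 2) * F 3 ^ (m2 + r) := by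
  simp only [prod_fin_add_add_two, Fin.val_castAdd, Fin.val_natAdd, prod_fin_qfun,
    qfun_add_fin, qfun_add_add, Fin.prod_const]
  rw [pow_add, pow_add, sq]
  ac_rfl

lemma prod_offKernel_qfun :
    ∏ k : Fin (m1 + m2 + r + 2), offKernel (qfun m1 m2 r k)
      = (5 / 4) ^ (m1 + 2) * (23 / 18) ^ (m2 + r) := by
  rw [prod_fin_qfun_add_add_two]; norm_num [offKernel]

lemma sum_coincWeight_qfun :
    ∑ k : Fin (m1 + m2 + r + 2), coincWeight (qfun m1 m2 r k)
      = (m1 + 2) * aa + (m2 + r) * bb := by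
  rw [sum_fin_qfun_add_add_two, coincWeight_two, coincWeight_three]; ring

variable {m1 m2} {N : ℕ} {d : Fin N → Fin (m1 + m2) → ℕ}

lemma IsUType.lt_qfun (hd : IsUType N m1 m2 d) (i : Fin N) (k : Fin (m1 + m2)) :
    d i k < qfun m1 m2 r k := by
  have := hd k
  rw [qfun_eq_of_lt m1 m2 r k.isLt]
  split_ifs at this ⊢
  exacts [this.1 i, this.1 i]

lemma IsUType.qfun_mul_card (hd : IsUType N m1 m2 d) (k : Fin (m1 + m2)) {v : ℕ}
    (hv : v < qfun m1 m2 r k) : qfun m1 m2 r k * #{i | d i k = v} = N := by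
  have := hd k
  rw [qfun_eq_of_lt m1 m2 r k.isLt] at hv ⊢
  split_ifs at this hv ⊢
  exacts [this.2 v hv, this.2 v hv]

lemma IsUType.sum_sum_ite_eq {N' : ℕ} {d' : Fin N' → Fin (m1 + m2) → ℕ}
    (hd : IsUType N m1 m2 d) (hd' : IsUType N' m1 m2 d') (k : Fin (m1 + m2)) (w : ℝ) :
    ∑ i, ∑ j, (if d i k = d' j k then w else 0) = N * (N' / qfun m1 m2 r k) * w := by
  simpa using sum_sum_ite_eq_of_balanced (Finset.range (qfun m1 m2 r k)) (d · k) (d' · k)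
    (fun i => Finset.mem_range.2 (hd.lt_qfun r i k))
    (fun v hv => by rw [Finset.card_range]; exact hd'.qfun_mul_card r k (Finset.mem_range.1 hv)) w

end Levels

section Entries

variable {n n1 m r M : ℕ} (d0 : Fin n → Fin m → ℕ) (d1 : Fin n1 → Fin m → ℕ)
  (d2 : Fin n1 → Fin r → ℕ) (D : Fin (n + n1) → Fin M → ℕ)

@[simp] lemma augDesign_castAdd_castAdd (i : Fin n) (k : Fin m) :
    augDesign n n1 m r d0 d1 d2 (Fin.castAdd n1 i) (Fin.castAdd r k) = d0 i k := by
  simp [augDesign]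

@[simp] lemma augDesign_castAdd_natAdd (i : Fin n) (k : Fin r) :
    augDesign n n1 m r d0 d1 d2 (Fin.castAdd n1 i) (Fin.natAdd m k) = 0 := by
  simp [augDesign]

@[simp] lemma augDesign_natAdd_castAdd (j : Fin n1) (k : Fin m) :
    augDesign n n1 m r d0 d1 d2 (Fin.natAdd n j) (Fin.castAdd r k) = d1 j k := by
  simp [augDesign]

@[simp] lemma augDesign_natAdd_natAdd (j : Fin n1) (k : Fin r) :
    augDesign n n1 m r d0 d1 d2 (Fin.natAdd n j) (Fin.natAdd m k) = d2 j k := by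
  simp [augDesign]

@[simp] lemma appendTwo_castAdd (x : Fin (n + n1)) (k : Fin M) :
    appendTwo n n1 M D x (Fin.castAdd 2 k) = D x k := by
  simp [appendTwo]

@[simp] lemma appendTwo_castAdd_natAdd (i : Fin n) (t : Fin 2) :
    appendTwo n n1 M D (Fin.castAdd n1 i) (Fin.natAdd M t) = 0 := by
  simp only [appendTwo, Fin.val_natAdd, Fin.val_castAdd]
  split_ifs <;> omega

lemma appendTwo_natAdd_lt_two (x : Fin (n + n1)) (t : Fin 2) :
    appendTwo n n1 M D x (Fin.natAdd M t) < 2 := by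
  simp only [appendTwo, Fin.val_natAdd]
  split_ifs <;> omega

@[simp] lemma appendTwo_natAdd_natAdd_zero (j : Fin n1) :
    appendTwo n n1 M D (Fin.natAdd n j) (Fin.natAdd M 0) = 1 := by
  simp [appendTwo]

@[simp] lemma appendTwo_natAdd_natAdd_one (j : Fin n1) :
    appendTwo n n1 M D (Fin.natAdd n j) (Fin.natAdd M 1)
      = if (j : ℕ) < n1 / 2 then 0 else 1 := by
  simp [appendTwo]

def blockedAugDesign (n n1 m r : ℕ) (d0 : Fin n → Fin m → ℕ) (d1 : Fin n1 → Fin m → ℕ)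
    (d2 : Fin n1 → Fin r → ℕ) : Fin (n + n1) → Fin (m + r + 2) → ℕ :=
  appendTwo n n1 (m + r) (augDesign n n1 m r d0 d1 d2)

lemma kernelProd_blockedAugDesign_castAdd (q : Fin (m + r + 2) → ℕ) (i j : Fin n) :
    kernelProd q (blockedAugDesign n n1 m r d0 d1 d2 (Fin.castAdd n1 i))
        (blockedAugDesign n n1 m r d0 d1 d2 (Fin.castAdd n1 j))
      = (3 / 2) ^ (r + 2)
        * kernelProd (fun k => q (Fin.castAdd 2 (Fin.castAdd r k))) (d0 i) (d0 j) := by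
  simp only [kernelProd, prod_fin_add_add_two, blockedAugDesign, appendTwo_castAdd,
    augDesign_castAdd_castAdd, augDesign_castAdd_natAdd, appendTwo_castAdd_natAdd,
    wdKernel_self, Fin.prod_const]
  ring

end Entries

section BlockedDesign

variable {n n1 m1 m2 r : ℕ} (d0 : Fin n → Fin (m1 + m2) → ℕ)
  (d1 : Fin n1 → Fin (m1 + m2) → ℕ) (d2 : Fin n1 → Fin r → ℕ)

lemma blockedAugDesign_lt_qfun (hd0 : IsUType n m1 m2 d0) (hd1 : IsUType n1 m1 m2 d1)
    (hd2 : ∀ j k, d2 j k = 1 ∨ d2 j k = 2) (x : Fin (n + n1)) (k : Fin (m1 + m2 + r + 2)) :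
    blockedAugDesign n n1 (m1 + m2) r d0 d1 d2 x k < qfun m1 m2 r k := by
  induction k using Fin.addCases with
  | right t =>
    rw [Fin.val_natAdd, qfun_add_add]
    exact appendTwo_natAdd_lt_two _ x t
  | left k =>
    induction k using Fin.addCases with
    | left k =>
      induction x using Fin.addCases with
      | left i => simpa [blockedAugDesign] using hd0.lt_qfun r i k
      | right j => simpa [blockedAugDesign] using hd1.lt_qfun r j k
    | right k =>
      rw [Fin.val_castAdd, Fin.val_natAdd, qfun_add_fin]
      induction x using Fin.addCases with
      | left i => simp [blockedAugDesign]
      | right j =>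
        simp only [blockedAugDesign, appendTwo_castAdd, augDesign_natAdd_natAdd]
        rcases hd2 j k with h | h <;> omega

lemma sum_sum_kernelProd_castAdd_castAdd :
    ∑ i : Fin n, ∑ j : Fin n, kernelProd (fun k : Fin (m1 + m2 + r + 2) => qfun m1 m2 r k)
        (blockedAugDesign n n1 (m1 + m2) r d0 d1 d2 (Fin.castAdd n1 i))
        (blockedAugDesign n n1 (m1 + m2) r d0 d1 d2 (Fin.castAdd n1 j))
      = (3 / 2) ^ (r + 2) * (n ^ 2 * (WD (fun k : Fin (m1 + m2) => qfun m1 m2 0 k) d0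
        + (4 / 3) ^ (m1 + m2))) := by
  have hq : (fun k : Fin (m1 + m2) => qfun m1 m2 r (Fin.castAdd 2 (Fin.castAdd r k) : ℕ))
      = fun k : Fin (m1 + m2) => qfun m1 m2 0 k := by
    funext k; simp only [Fin.val_castAdd, qfun_eq_of_lt _ _ _ k.isLt]
  simp only [kernelProd_blockedAugDesign_castAdd, ← Finset.mul_sum, hq, sum_sum_kernelProd]

lemma sum_sum_coinc_castAdd_natAdd (hev : Even n1) (hd0 : IsUType n m1 m2 d0)
    (hd1 : IsUType n1 m1 m2 d1) (hd2 : ∀ j k, d2 j k = 1 ∨ d2 j k = 2) :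
    ∑ i : Fin n, ∑ j : Fin n1, coinc (fun k : Fin (m1 + m2 + r + 2) => qfun m1 m2 r k)
        (blockedAugDesign n n1 (m1 + m2) r d0 d1 d2 (Fin.castAdd n1 i))
        (blockedAugDesign n n1 (m1 + m2) r d0 d1 d2 (Fin.natAdd n j))
      = n * n1 * phi2B m1 m2 := by
  rw [sum_sum_coinc, sum_fin_add_add_two]
  simp only [blockedAugDesign, appendTwo_castAdd, augDesign_castAdd_castAdd,
    augDesign_castAdd_natAdd, appendTwo_castAdd_natAdd, augDesign_natAdd_castAdd,
    augDesign_natAdd_natAdd, appendTwo_natAdd_natAdd_zero, appendTwo_natAdd_natAdd_one,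
    Fin.val_castAdd, Fin.val_natAdd, qfun_add_fin, qfun_add_add]
  have hzero : ∑ k : Fin r, ∑ i : Fin n, ∑ j : Fin n1,
      (if 0 = d2 j k then coincWeight 3 else 0) = 0 :=
    Finset.sum_eq_zero fun k _ => Finset.sum_eq_zero fun i _ => Finset.sum_eq_zero fun j _ =>
      if_neg (by rcases hd2 j k with h | h <;> omega)
  have hhalf := sum_sum_ite_eq_of_balanced {0, 1} (fun _ : Fin n => 0)
    (fun j : Fin n1 => if (j : ℕ) < n1 / 2 then 0 else 1) (fun _ => by simp)
    (fun v hv => by rw [Finset.card_pair zero_ne_one]; exact two_mul_card_filter_half hev hv)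
    (coincWeight 2)
  have hsum := sum_fin_qfun m1 m2 r fun q => (n : ℝ) * (n1 / q) * coincWeight q
  simp only [hd0.sum_sum_ite_eq r hd1, hzero, hhalf, hsum, Finset.card_pair zero_ne_one,
    zero_ne_one, if_false, Finset.sum_const_zero, add_zero]
  simp only [nsmul_eq_mul, Nat.cast_ofNat, coincWeight_two, coincWeight_three, phi2B]
  ring

lemma sum_sum_coinc_natAdd_natAdd (hev : Even n1) (hd1 : IsUType n1 m1 m2 d1)
    (hd2 : IsBalanced n1 r d2) :
    ∑ i : Fin n1, ∑ j : Fin n1, coinc (fun k : Fin (m1 + m2 + r + 2) => qfun m1 m2 r k)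
        (blockedAugDesign n n1 (m1 + m2) r d0 d1 d2 (Fin.natAdd n i))
        (blockedAugDesign n n1 (m1 + m2) r d0 d1 d2 (Fin.natAdd n j))
      = n1 * n1 * (phi2B m1 m2 + aa + bb * r / 2) := by
  rw [sum_sum_coinc, sum_fin_add_add_two]
  simp only [blockedAugDesign, appendTwo_castAdd, augDesign_natAdd_castAdd,
    augDesign_natAdd_natAdd, appendTwo_natAdd_natAdd_zero, appendTwo_natAdd_natAdd_one,
    Fin.val_castAdd, Fin.val_natAdd, qfun_add_fin, qfun_add_add]
  have hd2col (k : Fin r) := sum_sum_ite_eq_of_balanced {1, 2} (d2 · k) (d2 · k)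
    (fun i => by simpa using hd2.1 i k)
    (fun v hv => by
      rw [Finset.card_pair (by norm_num : (1 : ℕ) ≠ 2)]
      rcases Finset.mem_insert.1 hv with rfl | hv
      · exact (hd2.2 k).1
      · rw [Finset.mem_singleton.1 hv]; exact (hd2.2 k).2)
    (coincWeight 3)
  have hhalf := sum_sum_ite_eq_of_balanced {0, 1}
    (fun j : Fin n1 => if (j : ℕ) < n1 / 2 then 0 else 1)
    (fun j : Fin n1 => if (j : ℕ) < n1 / 2 then 0 else 1) (fun _ => by split_ifs <;> simp)
    (fun v hv => by rw [Finset.card_pair zero_ne_one]; exact two_mul_card_filter_half hev hv)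
    (coincWeight 2)
  have hsum := sum_fin_qfun m1 m2 r fun q => (n1 : ℝ) * (n1 / q) * coincWeight q
  simp only [hd1.sum_sum_ite_eq r hd1, hd2col, hhalf, hsum, Finset.card_pair zero_ne_one,
    Finset.card_pair (by norm_num : (1 : ℕ) ≠ 2), if_true, Finset.sum_const, Finset.card_univ,
    Fintype.card_fin]
  simp only [nsmul_eq_mul, Nat.cast_ofNat, coincWeight_two, coincWeight_three, phi2B]
  ring

lemma sum_sum_coinc_natAdd_natAdd_sub (hn1 : 2 ≤ n1) (hev : Even n1)
    (hd1 : IsUType n1 m1 m2 d1) (hd2 : IsBalanced n1 r d2) :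
    ∑ i : Fin n1, ∑ j : Fin n1, coinc (fun k : Fin (m1 + m2 + r + 2) => qfun m1 m2 r k)
        (blockedAugDesign n n1 (m1 + m2) r d0 d1 d2 (Fin.natAdd n i))
        (blockedAugDesign n n1 (m1 + m2) r d0 d1 d2 (Fin.natAdd n j))
      - n1 * ∑ k : Fin (m1 + m2 + r + 2), coincWeight (qfun m1 m2 r k)
      = n1 * (n1 - 1) * (aa + phi1B n1 m1 m2 r) := by
  have hn1R : (2 : ℝ) ≤ n1 := by exact_mod_cast hn1
  have hne : (n1 : ℝ) - 1 ≠ 0 := by linarith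
  rw [sum_sum_coinc_natAdd_natAdd d0 d1 d2 hev hd1 hd2, sum_coincWeight_qfun]
  unfold phi1B phi2B
  field_simp
  ring

end BlockedDesign

lemma LBW3B_eq (n n1 m1 m2 r : ℕ) (W0 : ℝ) :
    LBW3B n n1 m1 m2 r W0 = -(4 / 3) ^ (m1 + m2 + r + 2) + 1 / ((n : ℝ) + n1) ^ 2 *
      ((3 / 2) ^ (r + 2) * (n ^ 2 * (W0 + (4 / 3) ^ (m1 + m2)))
        + 2 * ((5 / 4) ^ (m1 + 2) * (23 / 18) ^ (m2 + r) * (n * n1 * Real.exp (phi2B m1 m2)))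
        + (n1 * (3 / 2) ^ (m1 + m2 + r + 2) + (5 / 4) ^ (m1 + 2) * (23 / 18) ^ (m2 + r)
          * (n1 * (n1 - 1) * Real.exp (aa + phi1B n1 m1 m2 r)))) := by
  rw [Real.exp_add, aa, Real.exp_log (by norm_num)]
  unfold LBW3B Cconst T1Bc T2Bc
  ring

theorem paper_stmt_6_general (n n1 m1 m2 r : ℕ) (hn1 : 2 ≤ n1)
    (hev : Even n1)
    (d0 : Fin n → Fin (m1 + m2) → ℕ) (d1 : Fin n1 → Fin (m1 + m2) → ℕ)
    (d2 : Fin n1 → Fin r → ℕ)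
    (hd0 : IsUType n m1 m2 d0) (hd1 : IsUType n1 m1 m2 d1) (hd2 : IsBalanced n1 r d2) :
    WD (fun k : Fin (m1 + m2 + r + 2) => qfun m1 m2 r (k : ℕ)) (appendTwo n n1 (m1 + m2 + r) (augDesign n n1 (m1 + m2) r d0 d1 d2)) ≥ LBW3B n n1 m1 m2 r (WD (fun k : Fin (m1 + m2) => qfun m1 m2 0 (k : ℕ)) d0) := by
  set q := fun k : Fin (m1 + m2 + r + 2) => qfun m1 m2 r k
  have hq (k) : q k = 2 ∨ q k = 3 := qfun_eq_two_or_three m1 m2 r k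
  have hB := blockedAugDesign_lt_qfun d0 d1 d2 hd0 hd1 hd2.1
  have h01 := mul_exp_le_sum_sum_kernelProd q hq (fun i => hB (Fin.castAdd n1 i))
    (fun j => hB (Fin.natAdd n j)) (sum_sum_coinc_castAdd_natAdd d0 d1 d2 hev hd0 hd1 hd2.1)
  have h11 := add_mul_exp_le_sum_sum_kernelProd q hq (fun j => hB (Fin.natAdd n j))
    (sum_sum_coinc_natAdd_natAdd_sub d0 d1 d2 hn1 hev hd1 hd2)
  rw [prod_offKernel_qfun] at h01 h11
  change WD q (blockedAugDesign n n1 (m1 + m2) r d0 d1 d2) ≥ _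
  rw [WD_eq, sum_sum_fin_add_of_comm _ fun x y => kernelProd_comm q _ _,
    sum_sum_kernelProd_castAdd_castAdd, LBW3B_eq]
  push_cast
  gcongr

theorem paper_stmt_6 (n n1 m1 m2 r : ℕ) (hn : 1 ≤ n) (hn1 : 2 ≤ n1)
    (hev : Even n1) (hm : 1 ≤ m1 + m2)
    (d0 : Fin n → Fin (m1 + m2) → ℕ) (d1 : Fin n1 → Fin (m1 + m2) → ℕ)
    (d2 : Fin n1 → Fin r → ℕ)
    (hd0 : IsUType n m1 m2 d0) (hd1 : IsUType n1 m1 m2 d1) (hd2 : IsBalanced n1 r d2) :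
    WD (fun k : Fin (m1 + m2 + r + 2) => qfun m1 m2 r (k : ℕ)) (appendTwo n n1 (m1 + m2 + r) (augDesign n n1 (m1 + m2) r d0 d1 d2)) ≥ LBW3B n n1 m1 m2 r (WD (fun k : Fin (m1 + m2) => qfun m1 m2 0 (k : ℕ)) d0) :=
  paper_stmt_6_general n n1 m1 m2 r hn1 hev d0 d1 d2 hd0 hd1 hd2

end CAUD

end
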